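/- arXiv:0908.2765 — 7 statements merged into one kernel-verified Lean document; each statement's English description precedes it below -/
import Mathlib

section
/- Let G be a finite simple graph and A a subset of its vertex set V, with complement Ā = V \ A. Then the number of distinct sets of the form N(X) ∩ Ā over all subsets X ⊆ A equals the number of distinct sets of the form N(Y) ∩ A over all subsets Y ⊆ Ā. (Symmetry of the boolean cut function cut-bool.) -/
open Finset

/-- The external neighborhood `N(X)`: vertices outside `X` adjacent to some vertex of `X`. -/
noncomputable def extNbhd {V : Type*} [Fintype V] (G : SimpleGraph V) (X : Finset V) :
    Finset V := by
  classical exact Finset.univ.filter fun v => v ∉ X ∧ ∃ x ∈ X, G.Adj x v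

/-- The neighborhood family of the cut `{A, Ā}`: the sets `N(X) ∩ Ā` for `X ⊆ A`. -/
noncomputable def nbhdFamily {V : Type*} [Fintype V] [DecidableEq V] (G : SimpleGraph V)
    (A : Finset V) : Finset (Finset V) :=
  A.powerset.image fun X => extNbhd G X ∩ Aᶜ

/-! The maps `X ↦ N(X) ∩ Ā` (on subsets of `A`) and `T ↦ A \ N(Ā \ T)` form a Galois
connection, so `N(A \ N(Ā \ T)) ∩ Ā = T` for every `T ∈ 𝒩(A)`.
Hence `T ↦ N(Ā \ T) ∩ A` embeds `𝒩(A)` into `𝒩(Ā)`; by symmetry the two families have the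
same size. -/

section

variable {V : Type*} [Fintype V] (G : SimpleGraph V)

lemma mem_extNbhd {X : Finset V} {v : V} :
    v ∈ extNbhd G X ↔ v ∉ X ∧ ∃ x ∈ X, G.Adj x v := by
  simp [extNbhd]

variable [DecidableEq V] {A : Finset V}

lemma extNbhd_inter_compl_mono {X Y : Finset V} (hXY : X ⊆ Y) (hY : Y ⊆ A) :
    extNbhd G X ∩ Aᶜ ⊆ extNbhd G Y ∩ Aᶜ := by
  intro v hv
  simp only [mem_inter, mem_compl, mem_extNbhd] at hv ⊢
  obtain ⟨⟨-, x, hx, hxv⟩, hvA⟩ := hv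
  exact ⟨⟨fun hvY => hvA (hY hvY), x, hXY hx, hxv⟩, hvA⟩

/-- Both sides say that there is no edge between `X` and `Ā \ T`. -/
lemma extNbhd_inter_compl_subset_iff {X : Finset V} (hX : X ⊆ A) (T : Finset V) :
    extNbhd G X ∩ Aᶜ ⊆ T ↔ X ⊆ A \ extNbhd G (Aᶜ \ T) := by
  constructor
  · intro hNT x hx
    refine mem_sdiff.2 ⟨hX hx, fun hxN => ?_⟩
    obtain ⟨-, b, hb, hbx⟩ := (mem_extNbhd G).1 hxN
    obtain ⟨hbA, hbT⟩ := mem_sdiff.1 hb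
    have hbX : b ∉ X := fun hbX => mem_compl.1 hbA (hX hbX)
    exact hbT (hNT (mem_inter.2 ⟨(mem_extNbhd G).2 ⟨hbX, x, hx, hbx.symm⟩, hbA⟩))
  · intro hXT v hv
    obtain ⟨hvN, hvA⟩ := mem_inter.1 hv
    obtain ⟨-, x, hx, hxv⟩ := (mem_extNbhd G).1 hvN
    obtain ⟨hxA, hxN⟩ := mem_sdiff.1 (hXT hx)
    by_contra hvT
    have hxT : x ∉ Aᶜ \ T := fun h => mem_compl.1 (mem_sdiff.1 h).1 hxA
    exact hxN ((mem_extNbhd G).2 ⟨hxT, v, mem_sdiff.2 ⟨hvA, hvT⟩, hxv.symm⟩)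

lemma extNbhd_sdiff_extNbhd_inter_compl {X : Finset V} (hX : X ⊆ A) :
    extNbhd G (A \ extNbhd G (Aᶜ \ (extNbhd G X ∩ Aᶜ))) ∩ Aᶜ = extNbhd G X ∩ Aᶜ := by
  set T := extNbhd G X ∩ Aᶜ
  have hclosure : A \ extNbhd G (Aᶜ \ T) ⊆ A := sdiff_subset
  have hX_le : X ⊆ A \ extNbhd G (Aᶜ \ T) :=
    (extNbhd_inter_compl_subset_iff G hX T).1 subset_rfl
  exact ((extNbhd_inter_compl_subset_iff G hclosure T).2 subset_rfl).antisymm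
    (extNbhd_inter_compl_mono G hX_le hclosure)

lemma card_nbhdFamily_le_compl (A : Finset V) :
    (nbhdFamily G A).card ≤ (nbhdFamily G Aᶜ).card := by
  refine card_le_card_of_injOn (fun T => extNbhd G (Aᶜ \ T) ∩ Aᶜᶜ) ?_ ?_
  · intro T _
    exact mem_image.2 ⟨Aᶜ \ T, mem_powerset.2 sdiff_subset, rfl⟩
  · rintro _ hT₁ _ hT₂ heq
    obtain ⟨X₁, hX₁, rfl⟩ := mem_image.1 (mem_coe.1 hT₁)
    obtain ⟨X₂, hX₂, rfl⟩ := mem_image.1 (mem_coe.1 hT₂)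
    have hclosure : A \ extNbhd G (Aᶜ \ (extNbhd G X₁ ∩ Aᶜ)) =
        A \ extNbhd G (Aᶜ \ (extNbhd G X₂ ∩ Aᶜ)) := by
      simpa only [compl_compl, sdiff_inter_self_right] using congrArg (A \ ·) heq
    rw [← extNbhd_sdiff_extNbhd_inter_compl G (mem_powerset.1 hX₁),
      ← extNbhd_sdiff_extNbhd_inter_compl G (mem_powerset.1 hX₂), hclosure]

end

/-- symmetry of the boolean cut function: the number of distinct sets
`N(X) ∩ Ā` over `X ⊆ A` equals the number of distinct sets `N(Y) ∩ A` over `Y ⊆ Ā`. -/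
theorem cutBool_symmetric {V : Type*} [Fintype V] [DecidableEq V] (G : SimpleGraph V)
    (A : Finset V) :
    (nbhdFamily G A).card = (nbhdFamily G Aᶜ).card := by
  have h := card_nbhdFamily_le_compl G Aᶜ
  rw [compl_compl] at h
  exact (card_nbhdFamily_le_compl G A).antisymm h
end

section
/- Let n ∈ ℕ, p ∈ [0,1], and k ≤ n/2. In the random graph G(n,p), the probability that there exists a vertex set S with |S| = k such that at least k vertices outside S have no neighbor in S (equivalently, |N(S)| < n − 2k) is at most C(n,k) · C(n−k,k) · (1−p)^{k²}. -/
set_option linter.deprecated false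

open Finset MeasureTheory
open scoped ENNReal

def graphOf {n : ℕ} (f : Sym2 (Fin n) → Bool) : SimpleGraph (Fin n) where
  Adj v w := v ≠ w ∧ f s(v, w) = true
  symm := ⟨fun v w ⟨h, hf⟩ => ⟨h.symm, by rwa [Sym2.eq_swap]⟩⟩
  loopless := ⟨fun v ⟨h, _⟩ => h rfl⟩

instance {n : ℕ} (f : Sym2 (Fin n) → Bool) : DecidableRel (graphOf f).Adj :=
  fun v w => inferInstanceAs (Decidable (v ≠ w ∧ f s(v, w) = true))

noncomputable def gnp (n : ℕ) (p : ℝ) (hp : p ≤ 1) :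
    Measure (Sym2 (Fin n) → Bool) :=
  Measure.pi fun _ =>
    (PMF.bernoulli (Real.toNNReal p) (Real.toNNReal_le_one.mpr hp)).toMeasure

/-! Union bound over the pairs `(S, T)` of disjoint `k`-sets: if `S` is bad, then some `k`-set
`T` outside `S` sends no edge to `S`. For fixed `(S, T)` this asks for the `k²` distinct pairs
between `T` and `S` to be non-edges, which by independence has probability `(1 - p)^{k²}`;
there are `C(n,k) · C(n-k,k)` such pairs `(S, T)`. -/

section CrossEdges

variable {α : Type*} [DecidableEq α]

def crossEdges (S T : Finset α) : Finset (Sym2 α) := (S ×ˢ T).image fun x => s(x.1, x.2)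

lemma card_crossEdges (S T : Finset α) (h : Disjoint S T) :
    #(crossEdges S T) = #S * #T := by
  rw [crossEdges, card_image_of_injOn, card_product]
  rintro ⟨a, b⟩ hab ⟨a', b'⟩ hab' heq
  simp only [coe_product, Set.mem_prod, mem_coe] at hab hab'
  rcases Sym2.eq_iff.mp heq with ⟨rfl, rfl⟩ | ⟨rfl, rfl⟩
  · rfl
  · exact (disjoint_left.mp h hab.1 hab'.2).elim

end CrossEdges

lemma sum_powersetCard_sum_powersetCard_compl_const {α M : Type*} [Fintype α] [DecidableEq α]
    [AddCommMonoid M] (k : ℕ) (c : M) :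
    ∑ S ∈ powersetCard k (univ : Finset α), ∑ _T ∈ powersetCard k Sᶜ, c
      = ((Fintype.card α).choose k * (Fintype.card α - k).choose k) • c := by
  rw [sum_congr rfl fun S hS => by
    rw [sum_const, card_powersetCard, card_compl, (mem_powersetCard.mp hS).2]]
  rw [sum_const, card_powersetCard, card_univ, smul_smul]

lemma pi_bernoulli_forall_eq_false {ι : Type*} [Fintype ι] (q : NNReal) (hq : q ≤ 1)
    (A : Finset ι) :
    Measure.pi (fun _ : ι => (PMF.bernoulli q hq).toMeasure) {f | ∀ i ∈ A, f i = false}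
      = (1 - q : NNReal) ^ #A := by
  have hA : {f : ι → Bool | ∀ i ∈ A, f i = false} = (A : Set ι).pi fun _ => {false} := by
    ext f; simp
  rw [hA, Measure.pi_pi_finset, prod_const,
    PMF.toMeasure_apply_singleton _ _ (measurableSet_singleton _), PMF.bernoulli_apply]
  simp

/-- An equality for `0 ≤ p`; for `p < 0` the model truncates `p` to `0`. -/
lemma gnp_forall_eq_false_le {n : ℕ} (p : ℝ) (hp : p ≤ 1) (A : Finset (Sym2 (Fin n))) :
    gnp n p hp {f | ∀ e ∈ A, f e = false} ≤ ENNReal.ofReal (1 - p) ^ #A := by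
  rw [gnp, pi_bernoulli_forall_eq_false]
  gcongr
  rw [ENNReal.ofReal, ENNReal.coe_le_coe, tsub_le_iff_right, ← Real.toNNReal_one]
  simpa using Real.toNNReal_add_le (r := 1 - p) (p := p)

lemma gnp_forall_crossEdges_eq_false_le {n : ℕ} (p : ℝ) (hp : p ≤ 1) {S T : Finset (Fin n)}
    (h : Disjoint T S) :
    gnp n p hp {f | ∀ e ∈ crossEdges T S, f e = false} ≤ ENNReal.ofReal (1 - p) ^ (#T * #S) :=
  card_crossEdges T S h ▸ gnp_forall_eq_false_le p hp _

lemma exists_powersetCard_compl_forall_crossEdges_eq_false {n k : ℕ}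
    {f : Sym2 (Fin n) → Bool} {S : Finset (Fin n)}
    (hk : k ≤ #{v | v ∉ S ∧ ∀ s ∈ S, ¬ (graphOf f).Adj v s}) :
    ∃ T ∈ powersetCard k Sᶜ, ∀ e ∈ crossEdges T S, f e = false := by
  obtain ⟨T, hT, hTk⟩ := exists_subset_card_eq hk
  have hTS : T ⊆ Sᶜ := fun v hv => mem_compl.mpr (mem_filter.mp (hT hv)).2.1
  refine ⟨T, mem_powersetCard.mpr ⟨hTS, hTk⟩, ?_⟩
  simp only [crossEdges, mem_image, mem_product, Prod.exists]
  rintro _ ⟨v, s, ⟨hv, hs⟩, rfl⟩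
  have hvs : v ≠ s := by rintro rfl; exact mem_compl.mp (hTS hv) hs
  simpa [graphOf, hvs] using (mem_filter.mp (hT hv)).2.2 s hs

theorem gnp_bad_set_prob_le_general (n k : ℕ) (p : ℝ) (hp1 : p ≤ 1) :
    gnp n p hp1
      {f | ∃ S : Finset (Fin n), S.card = k ∧
        k ≤ (Finset.univ.filter
              (fun v => v ∉ S ∧ ∀ s ∈ S, ¬ (graphOf f).Adj v s)).card}
    ≤ (n.choose k : ℝ≥0∞) * ((n - k).choose k : ℝ≥0∞) * ENNReal.ofReal (1 - p) ^ (k ^ 2) := by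
  classical
  let noCrossEdge (S T : Finset (Fin n)) : Set (Sym2 (Fin n) → Bool) :=
    {f | ∀ e ∈ crossEdges T S, f e = false}
  have hevent : ∀ S ∈ powersetCard k (univ : Finset (Fin n)), ∀ T ∈ powersetCard k Sᶜ,
      gnp n p hp1 (noCrossEdge S T) ≤ ENNReal.ofReal (1 - p) ^ (k ^ 2) := by
    intro S hS T hT
    rw [mem_powersetCard] at hS hT
    have hdisj : Disjoint T S := disjoint_left.mpr fun _ hv hs => mem_compl.mp (hT.1 hv) hs
    simpa [hS.2, hT.2, sq] using gnp_forall_crossEdges_eq_false_le p hp1 hdisj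
  calc _ ≤ gnp n p hp1
          (⋃ S ∈ powersetCard k univ, ⋃ T ∈ powersetCard k Sᶜ, noCrossEdge S T) := by
        refine measure_mono ?_
        rintro f ⟨S, hS, hk⟩
        obtain ⟨T, hT, hf⟩ := exists_powersetCard_compl_forall_crossEdges_eq_false hk
        exact Set.mem_biUnion (mem_powersetCard.mpr ⟨subset_univ S, hS⟩)
          (Set.mem_biUnion hT hf)
    _ ≤ ∑ S ∈ powersetCard k univ, ∑ T ∈ powersetCard k Sᶜ,
          gnp n p hp1 (noCrossEdge S T) :=
        (measure_biUnion_finset_le _ _).trans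
          (sum_le_sum fun _ _ => measure_biUnion_finset_le _ _)
    _ ≤ ∑ S ∈ powersetCard k univ, ∑ _T ∈ powersetCard k Sᶜ,
          ENNReal.ofReal (1 - p) ^ (k ^ 2) :=
        sum_le_sum fun S hS => sum_le_sum fun T hT => hevent S hS T hT
    _ = _ := by
        rw [sum_powersetCard_sum_powersetCard_compl_const, Fintype.card_fin, nsmul_eq_mul,
          Nat.cast_mul]

/-- In `G(n,p)` with `k ≤ n/2`, the probability that there is a vertex set `S`
with `|S| = k` such that at least `k` vertices outside `S` have no neighbor in `S`
is at most `C(n,k) · C(n−k,k) · (1−p)^{k²}`. -/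
theorem gnp_bad_set_prob_le (n k : ℕ) (hk : 2 * k ≤ n) (p : ℝ) (hp0 : 0 ≤ p) (hp1 : p ≤ 1) :
    gnp n p hp1
      {f | ∃ S : Finset (Fin n), S.card = k ∧
        k ≤ (Finset.univ.filter
              (fun v => v ∉ S ∧ ∀ s ∈ S, ¬ (graphOf f).Adj v s)).card}
    ≤ (n.choose k : ℝ≥0∞) * ((n - k).choose k : ℝ≥0∞) * ENNReal.ofReal (1 - p) ^ (k ^ 2) :=
  gnp_bad_set_prob_le_general n k p hp1
end

section
/- Let G be a finite simple graph on n vertices and k ∈ ℕ. Suppose that every vertex set S with |S| = k satisfies |N(S)| ≥ n − 2k. Then for every A ⊆ V(G), the number of distinct sets N(X) ∩ Ā over all X ⊆ A is at most 2 · ∑_{i=0}^{k} C(n,i); equivalently, cut-bool(A) ≤ 1 + log₂ ∑_{i=0}^{k} C(n,i) for every cut {A, Ā}. -/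
open Finset

section aux
variable {V : Type*} [Fintype V] [DecidableEq V] {n : ℕ}

noncomputable def smallSets (V : Type*) [Fintype V] [DecidableEq V] (k : ℕ) : Finset (Finset V) :=
  (Finset.range (k+1)).biUnion (fun i => Finset.powersetCard i (Finset.univ : Finset V))

lemma mem_smallSets {k : ℕ} {T : Finset V} : T ∈ smallSets V k ↔ T.card ≤ k := by
  simp only [smallSets, Finset.mem_biUnion, Finset.mem_range, Finset.mem_powersetCard,
    Nat.lt_succ_iff]
  constructor
  · rintro ⟨i, hi, -, rfl⟩; exact hi
  · intro h; exact ⟨T.card, h, subset_univ _, rfl⟩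

lemma card_smallSets {k : ℕ} (hn : Fintype.card V = n) :
    (smallSets V k).card = ∑ i ∈ Finset.range (k + 1), n.choose i := by
  rw [smallSets, Finset.card_biUnion]
  · refine Finset.sum_congr rfl fun i _ => ?_
    rw [Finset.card_powersetCard, Finset.card_univ, hn]
  · intro i _ j _ hij
    simp only [Finset.disjoint_left, Finset.mem_powersetCard]
    rintro T ⟨-, rfl⟩ ⟨-, h2⟩
    exact hij h2
end aux

/-- if every `k`-set `S` of an `n`-vertex graph satisfies `|N(S)| ≥ n − 2k`,
then every cut `{A, Ā}` has at most `2 · ∑_{i=0}^{k} C(n,i)` distinct sets `N(X) ∩ Ā`;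
equivalently `cut-bool(A) ≤ 1 + log₂ ∑_{i=0}^{k} C(n,i)`. -/
theorem nbhdFamily_card_le_of_ksets_large {V : Type*} [Fintype V] [DecidableEq V]
    (G : SimpleGraph V) (n k : ℕ) (hn : Fintype.card V = n)
    (h : ∀ S : Finset V, S.card = k → n - 2 * k ≤ (extNbhd G S).card) :
    ∀ A : Finset V,
      (nbhdFamily G A).card ≤ 2 * ∑ i ∈ Finset.range (k + 1), n.choose i ∧
      Real.logb 2 ((nbhdFamily G A).card) ≤
        1 + Real.logb 2 (∑ i ∈ Finset.range (k + 1), (n.choose i : ℝ)) := by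
  intro A
  set Sig := ∑ i ∈ Finset.range (k + 1), n.choose i with hSig
  have hSigpos : 0 < Sig := by
    rw [hSig]
    exact Finset.sum_pos' (fun i _ => Nat.zero_le _)
      ⟨0, Finset.mem_range.mpr (Nat.succ_pos k), by simp⟩
  have hcard : (nbhdFamily G A).card ≤ 2 * Sig := by
    by_cases hbig : n < 2 * k
    · have h1 : (nbhdFamily G A).card ≤ 2 ^ n := by
        calc (nbhdFamily G A).card ≤ A.powerset.card := Finset.card_image_le
          _ = 2 ^ A.card := Finset.card_powerset A
          _ ≤ 2 ^ n := Nat.pow_le_pow_right (by norm_num) (hn ▸ Finset.card_le_univ A)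
      have h2 : 2 ^ n ≤ 2 * Sig := by
        by_cases hkn : n ≤ k
        · have h3 : (2:ℕ) ^ n ≤ Sig := by
            rw [hSig, ← Nat.sum_range_choose n]
            exact Finset.sum_le_sum_of_subset (Finset.range_subset_range.mpr (by omega))
          omega
        push_neg at hkn
        have e1 : ∑ i ∈ Finset.Ico (k+1) (n+1), n.choose i ≤ Sig := by
          have e2 : ∑ i ∈ Finset.Ico (k+1) (n+1), n.choose i
              = ∑ i ∈ Finset.Ico (k+1) (n+1), n.choose (n - i) := by
            refine Finset.sum_congr rfl fun i hi => ?_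
            rw [Nat.choose_symm (Nat.lt_succ_iff.mp (Finset.mem_Ico.mp hi).2)]
          rw [e2, Finset.sum_Ico_reflect _ _ le_rfl]
          simp only [Nat.sub_self, Nat.succ_sub_succ_eq_sub, Nat.Ico_zero_eq_range]
          rw [hSig]
          exact Finset.sum_le_sum_of_subset (Finset.range_subset_range.mpr (by omega))
        have e3 : 2 ^ n = Sig + ∑ i ∈ Finset.Ico (k+1) (n+1), n.choose i := by
          rw [hSig, Finset.sum_range_add_sum_Ico _ (by omega : k+1 ≤ n+1)]
          exact (Nat.sum_range_choose n).symm
        rw [e3, two_mul]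
        exact Nat.add_le_add_left e1 Sig
      exact h1.trans h2
    · push_neg at hbig
      have key : nbhdFamily G A ⊆
          (smallSets V k).image (fun X => extNbhd G X ∩ Aᶜ) ∪
          (smallSets V k).image (fun T => Aᶜ \ T) := by
        intro B hB
        obtain ⟨X, hX, rfl⟩ := Finset.mem_image.mp hB
        rw [Finset.mem_powerset] at hX
        by_cases hXk : X.card ≤ k
        · exact Finset.mem_union_left _ (Finset.mem_image.mpr
            ⟨X, mem_smallSets.mpr hXk, rfl⟩)
        · push_neg at hXk
          obtain ⟨S, hSX, hSk⟩ := Finset.exists_subset_card_eq (le_of_lt hXk)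
          have hNS : extNbhd G S ⊆ (X \ S) ∪ extNbhd G X := by
            intro v hv
            simp only [extNbhd, Finset.mem_filter, Finset.mem_univ, true_and] at hv
            obtain ⟨hvS, x, hxS, hadj⟩ := hv
            by_cases hvX : v ∈ X
            · exact Finset.mem_union_left _ (Finset.mem_sdiff.mpr ⟨hvX, hvS⟩)
            · refine Finset.mem_union_right _ ?_
              simp only [extNbhd, Finset.mem_filter, Finset.mem_univ, true_and]
              exact ⟨hvX, x, hSX hxS, hadj⟩
          have hdisj : Disjoint X (extNbhd G X) := by
            simp only [Finset.disjoint_right, extNbhd, Finset.mem_filter]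
            tauto
          have hNScard : n - 2 * k ≤ (X \ S).card + (extNbhd G X).card :=
            (h S hSk).trans ((Finset.card_le_card hNS).trans (Finset.card_union_le _ _))
          have hXS : (X \ S).card = X.card - k := by
            rw [Finset.card_sdiff_of_subset hSX, hSk]
          have hY : ((X ∪ extNbhd G X)ᶜ).card ≤ k := by
            rw [Finset.card_compl, Finset.card_union_of_disjoint hdisj, hn]
            have hXn : X.card + (extNbhd G X).card ≤ n := by
              rw [← Finset.card_union_of_disjoint hdisj, ← hn]
              exact Finset.card_le_univ _
            omega
          refine Finset.mem_union_right _ (Finset.mem_image.mpr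
            ⟨(X ∪ extNbhd G X)ᶜ ∩ Aᶜ, mem_smallSets.mpr ?_, ?_⟩)
          · exact le_trans (Finset.card_le_card (Finset.inter_subset_left)) hY
          · ext v
            simp only [extNbhd, Finset.mem_sdiff, Finset.mem_inter, Finset.mem_compl,
              Finset.mem_union, Finset.mem_filter, Finset.mem_univ, true_and]
            have hvXA : v ∉ A → v ∉ X := fun hvA hvX => hvA (hX hvX)
            constructor
            · rintro ⟨hvA, hc⟩
              have hvX := hvXA hvA
              refine ⟨⟨hvX, ?_⟩, hvA⟩
              by_contra hex
              exact hc ⟨fun hor => hor.elim hvX (fun p => hex p.2), hvA⟩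
            · rintro ⟨⟨hvX, hex⟩, hvA⟩
              exact ⟨hvA, fun hc => hc.1 (Or.inr ⟨hvX, hex⟩)⟩
      calc (nbhdFamily G A).card ≤ _ := Finset.card_le_card key
        _ ≤ ((smallSets V k).image (fun X => extNbhd G X ∩ Aᶜ)).card +
            ((smallSets V k).image (fun T => Aᶜ \ T)).card := Finset.card_union_le _ _
        _ ≤ Sig + Sig := Nat.add_le_add
            (le_trans Finset.card_image_le (le_of_eq (card_smallSets hn)))
            (le_trans Finset.card_image_le (le_of_eq (card_smallSets hn)))
        _ = 2 * Sig := (two_mul Sig).symm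
  refine ⟨hcard, ?_⟩
  have hne : 0 < (nbhdFamily G A).card := by
    apply Finset.card_pos.mpr
    exact ⟨_, Finset.mem_image.mpr ⟨∅, Finset.mem_powerset.mpr (Finset.empty_subset A), rfl⟩⟩
  have hSigR : (0:ℝ) < (Sig : ℝ) := by exact_mod_cast hSigpos
  have hSigcast : (∑ i ∈ Finset.range (k + 1), (n.choose i : ℝ)) = (Sig : ℝ) := by
    rw [hSig]; push_cast; ring
  rw [hSigcast]
  calc Real.logb 2 ((nbhdFamily G A).card)
      ≤ Real.logb 2 (2 * Sig) := by
        refine Real.logb_le_logb_of_le (by norm_num) ?_ ?_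
        · exact_mod_cast hne
        · exact_mod_cast hcard
    _ = 1 + Real.logb 2 (Sig : ℝ) := by
        push_cast
        rw [Real.logb_mul (by norm_num) (ne_of_gt hSigR), Real.logb_self_eq_one] <;> norm_num
end

section
/- Let G be a finite simple graph of maximum degree at most d (d ≥ 1), let A ⊆ V(G), and let m be the number of edges of G with one endpoint in A and the other in Ā. Then there exist sets S ⊆ A and S′ ⊆ Ā and a bijection f : S → S′ with |S| ≥ m/(2d²) such that for every v ∈ S: f(v) is a neighbor of v, f(v) is the only neighbor of v in S′, and v is the only neighbor of f(v) in S (i.e., {(v, f(v)) : v ∈ S} is an induced matching across the cut). -/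
open Finset

lemma greedy_aux {V : Type*} [Fintype V] [DecidableEq V]
    (G : SimpleGraph V) [DecidableRel G.Adj] (d : ℕ)
    (hdeg : ∀ v : V, G.degree v ≤ d) :
    ∀ n (E : Finset (V × V)), E.card ≤ n → (∀ e ∈ E, G.Adj e.1 e.2) →
    ∃ M ⊆ E, E.card ≤ M.card * (2 * d ^ 2) ∧
      (∀ p ∈ M, ∀ q ∈ M, G.Adj p.1 q.2 → p = q) := by
  intro n
  induction n with
  | zero =>
    intro E hc _
    exact ⟨∅, empty_subset _, by simpa using hc, by simp⟩
  | succ n ih =>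
    intro E hc hadj
    rcases E.eq_empty_or_nonempty with rfl | ⟨⟨u, v⟩, huv⟩
    · exact ⟨∅, empty_subset _, by simp, by simp⟩
    · set E' := E.filter (fun p => ¬ G.Adj p.1 v ∧ ¬ G.Adj u p.2) with hE'
      have hE'sub : E' ⊆ E := filter_subset _ _
      have huvE' : (u, v) ∉ E' := by
        simp only [hE', mem_filter]
        intro h
        exact h.2.1 (hadj _ huv)
      -- bound on removed edges
      have hrem : (E.filter (fun p => G.Adj p.1 v ∨ G.Adj u p.2)).card ≤ 2 * d ^ 2 := by
        have h1 : E.filter (fun p => G.Adj p.1 v) ⊆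
            (G.neighborFinset v).biUnion (fun a => (G.neighborFinset a).image (fun b => (a, b))) := by
          intro p hp
          simp only [mem_filter] at hp
          simp only [mem_biUnion, mem_image, SimpleGraph.mem_neighborFinset]
          exact ⟨p.1, hp.2.symm, p.2, hadj p hp.1, rfl⟩
        have h2 : E.filter (fun p => G.Adj u p.2) ⊆
            (G.neighborFinset u).biUnion (fun b => (G.neighborFinset b).image (fun a => (a, b))) := by
          intro p hp
          simp only [mem_filter] at hp
          simp only [mem_biUnion, mem_image, SimpleGraph.mem_neighborFinset]
          exact ⟨p.2, hp.2, p.1, (hadj p hp.1).symm, rfl⟩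
        have c1 : (E.filter (fun p => G.Adj p.1 v)).card ≤ d * d := by
          refine (card_le_card h1).trans ((card_biUnion_le).trans ?_)
          calc ∑ a ∈ G.neighborFinset v, ((G.neighborFinset a).image (fun b => (a, b))).card
              ≤ ∑ a ∈ G.neighborFinset v, d := by
                refine sum_le_sum fun a _ => ?_
                exact (card_image_le).trans (by rw [G.card_neighborFinset_eq_degree]; exact hdeg a)
            _ ≤ d * d := by
                rw [sum_const, smul_eq_mul]
                exact Nat.mul_le_mul_right d (by rw [G.card_neighborFinset_eq_degree]; exact hdeg v)
        have c2 : (E.filter (fun p => G.Adj u p.2)).card ≤ d * d := by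
          refine (card_le_card h2).trans ((card_biUnion_le).trans ?_)
          calc ∑ b ∈ G.neighborFinset u, ((G.neighborFinset b).image (fun a => (a, b))).card
              ≤ ∑ b ∈ G.neighborFinset u, d := by
                refine sum_le_sum fun b _ => ?_
                exact (card_image_le).trans (by rw [G.card_neighborFinset_eq_degree]; exact hdeg b)
            _ ≤ d * d := by
                rw [sum_const, smul_eq_mul]
                exact Nat.mul_le_mul_right d (by rw [G.card_neighborFinset_eq_degree]; exact hdeg u)
        calc (E.filter (fun p => G.Adj p.1 v ∨ G.Adj u p.2)).card
            ≤ (E.filter (fun p => G.Adj p.1 v) ∪ E.filter (fun p => G.Adj u p.2)).card := by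
              apply card_le_card
              intro p hp
              simp only [mem_filter, mem_union] at hp ⊢
              tauto
          _ ≤ (E.filter (fun p => G.Adj p.1 v)).card + (E.filter (fun p => G.Adj u p.2)).card :=
              card_union_le _ _
          _ ≤ d * d + d * d := Nat.add_le_add c1 c2
          _ = 2 * d ^ 2 := by ring
      have hsplit : E.card ≤ E'.card + 2 * d ^ 2 := by
        have heq : E.filter (fun p => ¬(G.Adj p.1 v ∨ G.Adj u p.2)) = E' := by
          ext p
          simp only [hE', mem_filter, not_or]
        have htot := card_filter_add_card_filter_not (s := E)
          (p := fun p => G.Adj p.1 v ∨ G.Adj u p.2)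
        rw [heq] at htot
        omega
      have hE'card : E'.card ≤ n := by
        have hlt : E'.card < E.card := by
          apply card_lt_card
          refine ⟨hE'sub, fun hsub => huvE' (hsub huv)⟩
        omega
      obtain ⟨M, hME', hMcard, hMind⟩ := ih E' hE'card (fun e he => hadj e (hE'sub he))
      refine ⟨insert (u, v) M, ?_, ?_, ?_⟩
      · intro p hp
        rcases mem_insert.mp hp with rfl | hp
        · exact huv
        · exact hE'sub (hME' hp)
      · have : (u, v) ∉ M := fun h => huvE' (hME' h)
        rw [card_insert_of_notMem this]
        calc E.card ≤ E'.card + 2 * d ^ 2 := hsplit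
          _ ≤ M.card * (2 * d ^ 2) + 2 * d ^ 2 := Nat.add_le_add_right hMcard _
          _ = (M.card + 1) * (2 * d ^ 2) := by ring
      · intro p hp q hq hpq
        rcases mem_insert.mp hp with rfl | hp <;> rcases mem_insert.mp hq with rfl | hq
        · rfl
        · exfalso
          have := hME' hq
          simp only [hE', mem_filter] at this
          exact this.2.2 hpq
        · exfalso
          have := hME' hp
          simp only [hE', mem_filter] at this
          exact this.2.1 hpq
        · exact hMind p hp q hq hpq

/-- in a graph of maximum degree at most `d ≥ 1`, if `m` edges cross the cut
`{A, Ā}`, there are `S ⊆ A`, `S′ ⊆ Ā` and a bijection `f : S → S′` (an injection on `S`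
with image in `Ā`, `S′` being the image of `S`) with `|S| ≥ m/(2d²)` such that each
`v ∈ S` is matched to its unique neighbor `f v` in `S′` and `v` is the unique neighbor
of `f v` in `S`: an induced matching across the cut. -/
theorem exists_induced_matching_across_cut {V : Type*} [Fintype V] [DecidableEq V]
    (G : SimpleGraph V) [DecidableRel G.Adj] (d : ℕ) (hd : 1 ≤ d)
    (hdeg : ∀ v : V, G.degree v ≤ d) (A : Finset V) (m : ℕ)
    (hm : m = ((A ×ˢ Aᶜ).filter fun e => G.Adj e.1 e.2).card) :
    ∃ (S : Finset V) (f : V → V),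
      S ⊆ A ∧
      (m : ℝ) / (2 * (d : ℝ) ^ 2) ≤ S.card ∧
      Set.InjOn f ↑S ∧
      (∀ v ∈ S, f v ∈ Aᶜ) ∧
      (∀ v ∈ S, G.Adj v (f v)) ∧
      (∀ v ∈ S, ∀ w ∈ S, G.Adj v (f w) → v = w) := by
  classical
  set E := (A ×ˢ Aᶜ).filter fun e => G.Adj e.1 e.2 with hE
  have hadj : ∀ e ∈ E, G.Adj e.1 e.2 := fun e he => (mem_filter.mp he).2
  obtain ⟨M, hME, hMcard, hMind⟩ := greedy_aux G d hdeg E.card E le_rfl hadj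
  have hEmem : ∀ p ∈ M, p.1 ∈ A ∧ p.2 ∈ Aᶜ ∧ G.Adj p.1 p.2 := by
    intro p hp
    have := hME hp
    simp only [hE, mem_filter, mem_product] at this
    exact ⟨this.1.1, this.1.2, this.2⟩
  set S := M.image Prod.fst with hS
  have hfstinj : ∀ p ∈ M, ∀ q ∈ M, p.1 = q.1 → p = q := by
    intro p hp q hq h
    exact hMind p hp q hq (h ▸ (hEmem q hq).2.2)
  have hScard : S.card = M.card := by
    rw [hS]
    apply card_image_of_injOn
    intro p hp q hq h
    exact hfstinj p hp q hq h
  set f : V → V := fun a => if h : ∃ b, (a, b) ∈ M then h.choose else a with hf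
  have hkey : ∀ a ∈ S, (a, f a) ∈ M := by
    intro a ha
    simp only [hS, mem_image] at ha
    obtain ⟨p, hp, rfl⟩ := ha
    have h : ∃ b, (p.1, b) ∈ M := ⟨p.2, hp⟩
    simp only [hf, dif_pos h]
    exact h.choose_spec
  refine ⟨S, f, ?_, ?_, ?_, ?_, ?_, ?_⟩
  · intro a ha
    exact (hEmem _ (hkey a ha)).1
  · rw [div_le_iff₀ (by positivity)]
    rw [hScard]
    have : (m : ℝ) ≤ (M.card * (2 * d ^ 2) : ℕ) := by
      exact_mod_cast hm ▸ hMcard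
    calc (m : ℝ) ≤ (M.card * (2 * d ^ 2) : ℕ) := this
      _ = (M.card : ℝ) * (2 * (d : ℝ) ^ 2) := by push_cast; ring
  · intro a ha b hb h
    have ha' := hkey a (by exact_mod_cast ha)
    have hb' := hkey b (by exact_mod_cast hb)
    have : G.Adj a (b, f b).2 := by
      simp only [← h]
      exact (hEmem _ ha').2.2
    have := hMind _ ha' _ hb' this
    exact congrArg Prod.fst this
  · intro a ha
    exact (hEmem _ (hkey a ha)).2.1
  · intro a ha
    exact (hEmem _ (hkey a ha)).2.2
  · intro a ha b hb h
    have := hMind _ (hkey a ha) _ (hkey b hb) h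
    exact congrArg Prod.fst this
end

section
/- Let G be a finite simple graph, A ⊆ V(G), and suppose there exist S ⊆ A, S′ ⊆ Ā and a bijection f : S → S′ with |S| = s such that for every v ∈ S, f(v) is the unique neighbor of v in S′ and v is the unique neighbor of f(v) in S. Then the sets N(K) ∩ Ā for distinct K ⊆ S are pairwise distinct, and hence |𝒩(A)| ≥ 2^s, i.e. cut-bool(A) ≥ s. -/
open Finset

/-- if there is an induced matching of size `s` across the cut `{A, Ā}`,
given by `S ⊆ A` of cardinality `s` and an injection `f` matching each `v ∈ S` to its
unique neighbor `f v` in the image `S′ = f(S) ⊆ Ā`, with `v` the unique neighbor of `f v`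
in `S`, then distinct subsets `K ⊆ S` give distinct sets `N(K) ∩ Ā`, hence
`|𝒩(A)| ≥ 2^s`, i.e. `cut-bool(A) ≥ s`. -/
theorem nbhdFamily_card_ge_of_induced_matching {V : Type*} [Fintype V] [DecidableEq V]
    (G : SimpleGraph V) (A : Finset V) (S : Finset V) (f : V → V) (s : ℕ)
    (hSA : S ⊆ A) (hcard : S.card = s) (hinj : Set.InjOn f ↑S)
    (hout : ∀ v ∈ S, f v ∈ Aᶜ)
    (hadj : ∀ v ∈ S, G.Adj v (f v))
    (huniq : ∀ v ∈ S, ∀ w ∈ S, G.Adj v (f w) → v = w) :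
    (∀ K₁ ⊆ S, ∀ K₂ ⊆ S,
        extNbhd G K₁ ∩ Aᶜ = extNbhd G K₂ ∩ Aᶜ → K₁ = K₂) ∧
    2 ^ s ≤ (nbhdFamily G A).card ∧
    (s : ℝ) ≤ Real.logb 2 ((nbhdFamily G A).card) := by
  classical
  -- key membership lemma
  have key : ∀ K ⊆ S, ∀ v ∈ S, (f v ∈ extNbhd G K ∩ Aᶜ ↔ v ∈ K) := by
    intro K hK v hv
    simp only [extNbhd, Finset.mem_inter, Finset.mem_filter, Finset.mem_univ, true_and,
      Finset.mem_compl]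
    constructor
    · rintro ⟨⟨-, x, hxK, hadjx⟩, -⟩
      have := huniq x (hK hxK) v hv hadjx
      rwa [this] at hxK
    · intro hvK
      have hfvA : f v ∉ A := Finset.mem_compl.mp (hout v hv)
      refine ⟨⟨fun h => hfvA (hSA (hK h)), v, hvK, hadj v hv⟩, hfvA⟩
  have inj : ∀ K₁ ⊆ S, ∀ K₂ ⊆ S,
      extNbhd G K₁ ∩ Aᶜ = extNbhd G K₂ ∩ Aᶜ → K₁ = K₂ := by
    intro K₁ h₁ K₂ h₂ heq
    ext v
    constructor
    · intro hv
      have hvS : v ∈ S := h₁ hv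
      have := (key K₁ h₁ v hvS).mpr hv
      rw [heq] at this
      exact (key K₂ h₂ v hvS).mp this
    · intro hv
      have hvS : v ∈ S := h₂ hv
      have := (key K₂ h₂ v hvS).mpr hv
      rw [← heq] at this
      exact (key K₁ h₁ v hvS).mp this
  refine ⟨inj, ?_, ?_⟩
  · have himg : S.powerset.image (fun K => extNbhd G K ∩ Aᶜ) ⊆ nbhdFamily G A := by
      intro x hx
      obtain ⟨K, hK, rfl⟩ := Finset.mem_image.mp hx
      exact Finset.mem_image.mpr ⟨K, Finset.mem_powerset.mpr
        ((Finset.mem_powerset.mp hK).trans hSA), rfl⟩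
    have hcard2 : (S.powerset.image (fun K => extNbhd G K ∩ Aᶜ)).card = 2 ^ s := by
      rw [Finset.card_image_of_injOn, Finset.card_powerset, hcard]
      intro K₁ h₁ K₂ h₂
      exact inj K₁ (Finset.mem_powerset.mp h₁) K₂ (Finset.mem_powerset.mp h₂)
    calc 2 ^ s = (S.powerset.image (fun K => extNbhd G K ∩ Aᶜ)).card := hcard2.symm
      _ ≤ (nbhdFamily G A).card := Finset.card_le_card himg
  · have h0 : 2 ^ s ≤ (nbhdFamily G A).card := by
      calc 2 ^ s = (S.powerset.image (fun K => extNbhd G K ∩ Aᶜ)).card := by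
              rw [Finset.card_image_of_injOn, Finset.card_powerset, hcard]
              intro K₁ h₁ K₂ h₂
              exact inj K₁ (Finset.mem_powerset.mp h₁) K₂ (Finset.mem_powerset.mp h₂)
          _ ≤ (nbhdFamily G A).card := Finset.card_le_card (by
              intro x hx
              obtain ⟨K, hK, rfl⟩ := Finset.mem_image.mp hx
              exact Finset.mem_image.mpr ⟨K, Finset.mem_powerset.mpr
                ((Finset.mem_powerset.mp hK).trans hSA), rfl⟩)
    have h1 : (2 : ℝ) ^ s ≤ ((nbhdFamily G A).card : ℝ) := by exact_mod_cast h0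
    have : (s : ℝ) = Real.logb 2 ((2:ℝ) ^ s) := by
      rw [Real.logb_pow]; simp
    rw [this]
    exact Real.logb_le_logb_of_le (by norm_num) (by positivity) h1
end

section
/- Let G be a finite simple graph of maximum degree at most d (d ≥ 1), let A ⊆ V(G), and let m be the number of edges of G with one endpoint in A and one in Ā. Then |𝒩(A)| ≥ 2^{m/(2d²)}; equivalently, 2d² · cut-bool(A) ≥ cut-car(A), where cut-car(A) = m. -/
open Finset

lemma extNbhd_mem {V : Type*} [Fintype V] (G : SimpleGraph V) (X : Finset V) (v : V) :
    v ∈ extNbhd G X ↔ v ∉ X ∧ ∃ x ∈ X, G.Adj x v := by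
  simp [extNbhd]


lemma greedy {V : Type*} [Fintype V] [DecidableEq V] (G : SimpleGraph V) [DecidableRel G.Adj]
    (d : ℕ) (hdeg : ∀ v : V, G.degree v ≤ d) :
    ∀ F : Finset (V × V), (∀ e ∈ F, G.Adj e.1 e.2) →
      ∃ S ⊆ F, (∀ e ∈ S, ∀ f ∈ S, e ≠ f → ¬ G.Adj f.1 e.2) ∧ F.card ≤ 2 * d ^ 2 * S.card := by
  intro F
  induction F using Finset.strongInduction with
  | _ F ih =>
    intro hF
    rcases F.eq_empty_or_nonempty with rfl | ⟨e, he⟩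
    · exact ⟨∅, by simp⟩
    · set R := F.filter (fun f => G.Adj e.1 f.2 ∨ G.Adj f.1 e.2) with hR
      have heR : e ∈ R := by simp [hR, he, hF e he]
      have hRF : R ⊆ F := filter_subset _ _
      have hFss : F \ R ⊂ F := by
        refine Finset.sdiff_ssubset hRF ⟨e, heR⟩
      obtain ⟨S, hSsub, hind, hcard⟩ := ih (F \ R) hFss
        (fun f hf => hF f (mem_sdiff.mp hf).1)
      have heS : e ∉ S := fun h => (mem_sdiff.mp (hSsub h)).2 heR
      have hnotR : ∀ f ∈ S, ¬ G.Adj e.1 f.2 ∧ ¬ G.Adj f.1 e.2 := by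
        intro f hf
        have := (mem_sdiff.mp (hSsub hf)).2
        simp only [hR, mem_filter, not_and, not_or] at this
        exact this (mem_sdiff.mp (hSsub hf)).1
      -- card of R
      have hRcard : R.card ≤ 2 * d ^ 2 := by
        have hsub : R ⊆ (G.neighborFinset e.1).biUnion
              (fun b => (G.neighborFinset b).image (fun a => (a, b))) ∪
            (G.neighborFinset e.2).biUnion
              (fun a => (G.neighborFinset a).image (fun b => (a, b))) := by
          intro f hf
          simp only [hR, mem_filter] at hf
          obtain ⟨hfF, hadj⟩ := hf
          have hff := hF f hfF
          rcases hadj with h1 | h2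
          · apply mem_union_left
            refine mem_biUnion.mpr ⟨f.2, ?_, ?_⟩
            · simpa [SimpleGraph.mem_neighborFinset] using h1
            · exact mem_image.mpr ⟨f.1, by simpa [SimpleGraph.mem_neighborFinset] using hff.symm, rfl⟩
          · apply mem_union_right
            refine mem_biUnion.mpr ⟨f.1, ?_, ?_⟩
            · simpa [SimpleGraph.mem_neighborFinset] using h2.symm
            · exact mem_image.mpr ⟨f.2, by simpa [SimpleGraph.mem_neighborFinset] using hff, rfl⟩
        have hb : ∀ (w : V) (g : V → V × V),
            ((G.neighborFinset w).biUnion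
              (fun u => (G.neighborFinset u).image (fun x => g x))).card ≤ d ^ 2 → True := fun _ _ _ => trivial
        have h1 : ((G.neighborFinset e.1).biUnion
            (fun b => (G.neighborFinset b).image (fun a => (a, b)))).card ≤ d ^ 2 := by
          calc _ ≤ ∑ b ∈ G.neighborFinset e.1, ((G.neighborFinset b).image (fun a => (a, b))).card :=
                Finset.card_biUnion_le
            _ ≤ ∑ b ∈ G.neighborFinset e.1, d := by
                refine Finset.sum_le_sum fun b _ => ?_
                calc ((G.neighborFinset b).image (fun a => (a, b))).card
                    ≤ (G.neighborFinset b).card := Finset.card_image_le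
                  _ ≤ d := by rw [SimpleGraph.card_neighborFinset_eq_degree]; exact hdeg b
            _ = (G.neighborFinset e.1).card * d := by rw [Finset.sum_const, smul_eq_mul]
            _ ≤ d * d := by
                have := hdeg e.1
                rw [← SimpleGraph.card_neighborFinset_eq_degree] at this
                exact Nat.mul_le_mul_right d this
            _ = d ^ 2 := (sq d).symm
        have h2 : ((G.neighborFinset e.2).biUnion
            (fun a => (G.neighborFinset a).image (fun b => (a, b)))).card ≤ d ^ 2 := by
          calc _ ≤ ∑ a ∈ G.neighborFinset e.2, ((G.neighborFinset a).image (fun b => (a, b))).card :=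
                Finset.card_biUnion_le
            _ ≤ ∑ a ∈ G.neighborFinset e.2, d := by
                refine Finset.sum_le_sum fun a _ => ?_
                calc ((G.neighborFinset a).image (fun b => (a, b))).card
                    ≤ (G.neighborFinset a).card := Finset.card_image_le
                  _ ≤ d := by rw [SimpleGraph.card_neighborFinset_eq_degree]; exact hdeg a
            _ = (G.neighborFinset e.2).card * d := by rw [Finset.sum_const, smul_eq_mul]
            _ ≤ d * d := by
                have := hdeg e.2
                rw [← SimpleGraph.card_neighborFinset_eq_degree] at this
                exact Nat.mul_le_mul_right d this
            _ = d ^ 2 := (sq d).symm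
        calc R.card ≤ _ := Finset.card_le_card hsub
          _ ≤ _ + _ := Finset.card_union_le _ _
          _ ≤ d ^ 2 + d ^ 2 := Nat.add_le_add h1 h2
          _ = 2 * d ^ 2 := by ring
      refine ⟨insert e S, ?_, ?_, ?_⟩
      · intro f hf
        rcases mem_insert.mp hf with rfl | hf'
        · exact he
        · exact (mem_sdiff.mp (hSsub hf')).1
      · intro f hf g hg hfg
        rcases mem_insert.mp hf with rfl | hf' <;> rcases mem_insert.mp hg with rfl | hg'
        · exact absurd rfl hfg
        · exact (hnotR g hg').2
        · exact (hnotR f hf').1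
        · exact hind f hf' g hg' hfg
      · have : F.card = (F \ R).card + R.card := (Finset.card_sdiff_add_card_eq_card hRF).symm
        rw [this, Finset.card_insert_of_notMem heS]
        calc (F \ R).card + R.card ≤ 2 * d ^ 2 * S.card + 2 * d ^ 2 := Nat.add_le_add hcard hRcard
          _ = 2 * d ^ 2 * (S.card + 1) := by ring

/-- in a graph of maximum degree at most `d ≥ 1`, if `m` edges cross the cut
`{A, Ā}` (`m = cut-car(A)`), then `|𝒩(A)| ≥ 2^{m/(2d²)}`; equivalently
`2d² · cut-bool(A) ≥ cut-car(A)`. -/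
theorem nbhdFamily_card_ge_of_bounded_degree {V : Type*} [Fintype V] [DecidableEq V]
    (G : SimpleGraph V) [DecidableRel G.Adj] (d : ℕ) (hd : 1 ≤ d)
    (hdeg : ∀ v : V, G.degree v ≤ d) (A : Finset V) (m : ℕ)
    (hm : m = ((A ×ˢ Aᶜ).filter fun e => G.Adj e.1 e.2).card) :
    (2 : ℝ) ^ ((m : ℝ) / (2 * (d : ℝ) ^ 2)) ≤ ((nbhdFamily G A).card : ℝ) ∧
    (m : ℝ) ≤ 2 * (d : ℝ) ^ 2 * Real.logb 2 ((nbhdFamily G A).card) := by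
  classical
  set F := (A ×ˢ Aᶜ).filter fun e : V × V => G.Adj e.1 e.2 with hF
  have hFadj : ∀ e ∈ F, G.Adj e.1 e.2 := fun e he => (mem_filter.mp he).2
  have hFA : ∀ e ∈ F, e.1 ∈ A ∧ e.2 ∈ Aᶜ := by
    intro e he
    have := (mem_filter.mp he).1
    exact mem_product.mp this
  obtain ⟨S, hSF, hind, hScard⟩ := greedy G d hdeg F hFadj
  -- first injectivity on S
  have hfst : Set.InjOn Prod.fst (S : Set (V × V)) := by
    intro e he f hf hef
    by_contra hne
    exact hind e he f hf (fun h => hne h) (hef ▸ hFadj e (hSF he))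
  set T := S.image Prod.fst with hT
  have hTcard : T.card = S.card := Finset.card_image_of_injOn hfst
  have hTA : T ⊆ A := by
    intro a ha
    obtain ⟨e, heS, rfl⟩ := mem_image.mp ha
    exact (hFA e (hSF heS)).1
  -- injective map from powerset of T into nbhdFamily
  have hmain : T.powerset.card ≤ (nbhdFamily G A).card := by
    apply Finset.card_le_card_of_injOn (fun X => extNbhd G X ∩ Aᶜ)
    · intro X hX
      exact mem_image.mpr ⟨X, mem_powerset.mpr ((mem_powerset.mp hX).trans hTA), rfl⟩
    · intro X hX Y hY hXY
      have key : ∀ Z W : Finset V, Z ∈ T.powerset → W ∈ T.powerset →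
          extNbhd G Z ∩ Aᶜ = extNbhd G W ∩ Aᶜ → Z ⊆ W := by
        intro Z W hZ hW hZW
        intro a haZ
        have haT : a ∈ T := mem_powerset.mp hZ haZ
        obtain ⟨e, heS, rfl⟩ := mem_image.mp haT
        have he2 : e.2 ∈ extNbhd G Z ∩ Aᶜ := by
          rw [mem_inter, extNbhd_mem]
          refine ⟨⟨?_, e.1, haZ, hFadj e (hSF heS)⟩, (hFA e (hSF heS)).2⟩
          intro h
          have : e.2 ∈ A := hTA (mem_powerset.mp hZ h)
          exact (mem_compl.mp (hFA e (hSF heS)).2) this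
        rw [hZW, mem_inter, extNbhd_mem] at he2
        obtain ⟨⟨_, y, hyW, hyadj⟩, _⟩ := he2
        have hyT : y ∈ T := mem_powerset.mp hW hyW
        obtain ⟨f, hfS, rfl⟩ := mem_image.mp hyT
        have hef : f = e := by
          by_contra hne
          exact hind e heS f hfS (fun h => hne h.symm) hyadj
        rw [hef] at hyW
        exact hyW
      exact Finset.Subset.antisymm (key X Y hX hY hXY) (key Y X hY hX hXY.symm)
  rw [Finset.card_powerset, hTcard] at hmain
  -- now real arithmetic
  have hd2 : (0:ℝ) < 2 * (d:ℝ) ^ 2 := by positivity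
  have hmle : (m:ℝ) ≤ 2 * (d:ℝ) ^ 2 * S.card := by
    rw [hm]
    exact_mod_cast hScard
  have hexp : (m:ℝ) / (2 * (d:ℝ) ^ 2) ≤ (S.card : ℝ) := by
    rw [div_le_iff₀ hd2]
    linarith [hmle]
  have h1 : (2:ℝ) ^ ((m:ℝ) / (2 * (d:ℝ) ^ 2)) ≤ ((nbhdFamily G A).card : ℝ) := by
    calc (2:ℝ) ^ ((m:ℝ) / (2 * (d:ℝ) ^ 2)) ≤ (2:ℝ) ^ ((S.card : ℝ)) :=
          Real.rpow_le_rpow_of_exponent_le one_le_two hexp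
      _ = ((2 ^ S.card : ℕ) : ℝ) := by
          rw [Real.rpow_natCast]; push_cast; ring
      _ ≤ ((nbhdFamily G A).card : ℝ) := by exact_mod_cast hmain
  refine ⟨h1, ?_⟩
  have hpos : (0:ℝ) < (2:ℝ) ^ ((m:ℝ) / (2 * (d:ℝ) ^ 2)) := Real.rpow_pos_of_pos two_pos _
  have hlog : (m:ℝ) / (2 * (d:ℝ) ^ 2) ≤ Real.logb 2 ((nbhdFamily G A).card) := by
    have := Real.logb_le_logb_of_le (b := 2) (by norm_num) hpos h1
    rwa [Real.logb_rpow (by norm_num) (by norm_num)] at this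
  calc (m:ℝ) = (2 * (d:ℝ) ^ 2) * ((m:ℝ) / (2 * (d:ℝ) ^ 2)) := by field_simp
    _ ≤ 2 * (d:ℝ) ^ 2 * Real.logb 2 ((nbhdFamily G A).card) := by
        exact mul_le_mul_of_nonneg_left hlog (le_of_lt hd2)
end

section
/- Let G be a finite simple graph on n ≥ 2 vertices and A ⊆ V(G), and suppose the VC dimension of the neighborhood family 𝒩(A) is at least 2. Then cut-bool(A) ≤ VC(𝒩(A)) · log₂ n. (Second inequality of the theorem VC(A) ≤ cut-bool(A) ≤ log n · VC(A).) -/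
open Finset

lemma two_mul_choose_le_pow_aux (n k : ℕ) (hk : 2 ≤ k) : 2 * n.choose k ≤ n ^ k := by
  calc 2 * n.choose k ≤ Nat.factorial k * n.choose k := by
        have : 2 ≤ Nat.factorial k := le_trans (by norm_num) (Nat.factorial_le hk)
        exact Nat.mul_le_mul_right _ this
    _ = n.descFactorial k := (Nat.descFactorial_eq_factorial_mul_choose n k).symm
    _ ≤ n ^ k := Nat.descFactorial_le_pow n k

lemma iic_eq_range_aux (d : ℕ) : Iic d = range (d + 1) := by
  ext; simp [Nat.lt_succ_iff]

lemma sum_choose_le_pow_aux (n d : ℕ) (hn : 2 ≤ n) (hd : 2 ≤ d) :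
    ∑ k ∈ Iic d, n.choose k ≤ n ^ d := by
  rw [iic_eq_range_aux]
  induction d with
  | zero => omega
  | succ d ih =>
    rcases Nat.lt_or_ge d 2 with h | h
    · interval_cases d
      · omega
      · have h2 : ∑ k ∈ range 2, n.choose k + n.choose 2 ≤ n ^ 2 := by
          have h3 : 2 * n.choose 2 = n * (n - 1) := by
            have := Nat.descFactorial_eq_factorial_mul_choose n 2
            simp [Nat.descFactorial] at this
            rw [← this, Nat.mul_comm]
          simp [Finset.sum_range_succ]
          nlinarith [hn, h3, Nat.sub_add_cancel (by omega : 1 ≤ n)]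
        rw [Finset.sum_range_succ]
        exact h2
    · have ih' := ih (by omega)
      rw [Finset.sum_range_succ]
      have h1 : 2 * n.choose (d+1) ≤ n ^ (d+1) := two_mul_choose_le_pow_aux n (d+1) (by omega)
      have h2 : 2 * n ^ d ≤ n ^ (d+1) := by
        rw [pow_succ]; nlinarith [pow_pos (by omega : 0 < n) d]
      omega

/-- for a graph on `n ≥ 2` vertices and a cut `{A, Ā}` whose neighborhood
family has VC dimension at least 2, `cut-bool(A) ≤ VC(𝒩(A)) · log₂ n`. -/
theorem cutBool_le_vcDim_mul_log {V : Type*} [Fintype V] [DecidableEq V]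
    (G : SimpleGraph V) (A : Finset V) (n : ℕ) (hn : Fintype.card V = n) (hn2 : 2 ≤ n)
    (hvc : 2 ≤ (nbhdFamily G A).vcDim) :
    Real.logb 2 ((nbhdFamily G A).card) ≤
      ((nbhdFamily G A).vcDim : ℝ) * Real.logb 2 (n : ℝ) := by
  set 𝒜 := nbhdFamily G A
  have hcard : 𝒜.card ≤ n ^ 𝒜.vcDim := by
    calc 𝒜.card ≤ 𝒜.shatterer.card := Finset.card_le_card_shatterer 𝒜
      _ ≤ ∑ k ∈ Iic 𝒜.vcDim, (Fintype.card V).choose k :=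
          Finset.card_shatterer_le_sum_vcDim
      _ = ∑ k ∈ Iic 𝒜.vcDim, n.choose k := by rw [hn]
      _ ≤ n ^ 𝒜.vcDim := sum_choose_le_pow_aux n _ hn2 hvc
  have hne : 𝒜.Nonempty := (Finset.powerset_nonempty A).image _
  have hpos : (0 : ℝ) < 𝒜.card := by exact_mod_cast Finset.card_pos.2 hne
  have hpos' : (0 : ℝ) < (n : ℝ) ^ 𝒜.vcDim := by positivity
  calc Real.logb 2 (𝒜.card) ≤ Real.logb 2 ((n : ℝ) ^ 𝒜.vcDim) := by
        apply (Real.logb_le_logb (by norm_num) hpos hpos').mpr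
        exact_mod_cast hcard
    _ = (𝒜.vcDim : ℝ) * Real.logb 2 (n : ℝ) := Real.logb_pow 2 _ _
end
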